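/- Let Φ be a real n×m matrix with full column rank whose columns φ_1,…,φ_m each have unit Euclidean norm, let y ∈ ℝⁿ, and let k ≤ m. Let x_k be a vector achieving the smallest residual norm ‖y − Φx‖₂ among all x ∈ ℝ^m with at most k non-zero entries, and set r_k = y − Φx_k. If (σ_min(Φ) / √(2(2 − σ_min(Φ)²))) · min_{i : (x_k)_i ≠ 0} |(x_k)_i| > ‖r_k‖₂, then Backward Regression started from the full active set {1,…,m} and run for m − ‖x_k‖₀ iterations terminates with active set equal to the support of x_k, whose least-squares coefficients equal x_k; that is, Backward Regression solves the subset selection problem to optimality. -/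

import Mathlib

/-- The least-squares residual `r_A = y − P_A y`, where `P_A` is the orthogonal projection
onto `span{φ_j : j ∈ A}`. -/
noncomputable def lsResidual {n m : ℕ} (φ : Fin m → EuclideanSpace ℝ (Fin n))
    (y : EuclideanSpace ℝ (Fin n)) (A : Finset (Fin m)) : EuclideanSpace ℝ (Fin n) :=
  y - (Submodule.orthogonalProjection (Submodule.span ℝ (φ '' (A : Set (Fin m)))) y :
    EuclideanSpace ℝ (Fin n))

/-- One step of Backward Regression: delete an active index minimizing `‖r_{A∖{i}}‖`
(any tie-breaking). -/
def BRStep {n m : ℕ} (φ : Fin m → EuclideanSpace ℝ (Fin n))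
    (y : EuclideanSpace ℝ (Fin n)) (A B : Finset (Fin m)) : Prop :=
  ∃ i ∈ A, B = A.erase i ∧
    ∀ j ∈ A, ‖lsResidual φ y (A.erase i)‖ ≤ ‖lsResidual φ y (A.erase j)‖

/-- The smallest singular value of the matrix with columns `φ j`,
`σ_min = inf {‖Σ_j v_j φ_j‖ : ‖v‖₂ = 1}`. -/
noncomputable def sigmaMin {n : ℕ} {ι : Type*} [Fintype ι]
    (φ : ι → EuclideanSpace ℝ (Fin n)) : ℝ :=
  sInf {t : ℝ | ∃ v : EuclideanSpace ℝ ι, ‖v‖ = 1 ∧ t = ‖∑ j, v j • φ j‖}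

/-!
Write `r = y - Φ x_k` and `S` for the support of `x_k`. Optimality over vectors supported on `S`
makes `Φ x_k` the projection of `y` onto `span φ(S)`, so `r ⊥ φ_j` for `j ∈ S` and every active
set `A ⊇ S` has `‖r_A‖ ≤ ‖r‖`. If instead some `i ∈ S` is missing from `A`, then
`r_A = r + Φ d` with `d_i = (x_k)_i`. Split `r` into its component `Φ u` in the column span and
the orthogonal rest; `r ⊥ φ_i` forces `σ |u_i| ≤ √(1 - σ²) ‖Φ u‖` (a discriminant argument
along `φ_i`), and together with `σ |d_i + u_i| ≤ ‖Φ (d + u)‖` and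
`1 + √(1 - σ²) ≤ √(2 (2 - σ²))` the gap hypothesis gives `‖r_A‖ > ‖r‖`. So residuals strictly
separate supersets of `S` from all other sets: every Backward Regression step from a proper
superset of `S` deletes an index outside `S`, and after `m - |S|` steps the active set is `S`.
-/

open Finset Submodule
open scoped RealInnerProductSpace

theorem sq_mul_sq_le_of_forall_sq_le {σ t a : ℝ} (hσ : σ ^ 2 ≤ 1)
    (h : ∀ s, σ ^ 2 * s ^ 2 ≤ t ^ 2 + (s - a) ^ 2) : σ ^ 2 * a ^ 2 ≤ (1 - σ ^ 2) * t ^ 2 := by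
  rcases hσ.lt_or_eq with hlt | heq
  · have hd : 0 < 1 - σ ^ 2 := sub_pos.2 hlt
    -- `(1 - σ²) (t² + (s - a)² - σ² s²) = ((1 - σ²) s - a)² + (1 - σ²) t² - σ² a²`;
    -- take `s = a / (1 - σ²)` to kill the square.
    have key : (1 - σ ^ 2) * (t ^ 2 + (a / (1 - σ ^ 2) - a) ^ 2 - σ ^ 2 * (a / (1 - σ ^ 2)) ^ 2)
        = (1 - σ ^ 2) * t ^ 2 - σ ^ 2 * a ^ 2 := by
      field_simp
      ring
    nlinarith [mul_nonneg hd.le (sub_nonneg.2 (h (a / (1 - σ ^ 2))))]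
  · rcases eq_or_ne a 0 with rfl | ha
    · simp [heq]
    have key := h ((t ^ 2 + a ^ 2 + 1) / (2 * a))
    have : 2 * a * ((t ^ 2 + a ^ 2 + 1) / (2 * a)) = t ^ 2 + a ^ 2 + 1 := by field_simp
    nlinarith

theorem mul_one_add_sqrt_lt_of_lt_div {σ R M : ℝ} (hσ0 : 0 ≤ σ) (hσ1 : σ ≤ 1) (hR : 0 ≤ R)
    (h : R < σ / √(2 * (2 - σ ^ 2)) * M) : R * (1 + √(1 - σ ^ 2)) < σ * M := by
  have hb := Real.sq_sqrt (show 0 ≤ 1 - σ ^ 2 by nlinarith)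
  have hle : 1 + √(1 - σ ^ 2) ≤ √(2 * (2 - σ ^ 2)) :=
    Real.le_sqrt_of_sq_le (by nlinarith [sq_nonneg (1 - √(1 - σ ^ 2))])
  have hq : 0 < √(2 * (2 - σ ^ 2)) := (by positivity : (0 : ℝ) < 1 + √(1 - σ ^ 2)).trans_le hle
  rw [div_mul_eq_mul_div, lt_div_iff₀ hq] at h
  exact (mul_le_mul_of_nonneg_left hle hR).trans_lt h

theorem Submodule.mem_span_image_finset_iff_exists_sum {ι R M : Type*} [Fintype ι] [Semiring R]
    [AddCommMonoid M] [Module R M] {v : ι → M} {A : Finset ι} {x : M} :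
    x ∈ span R (v '' A) ↔ ∃ c : ι → R, (∀ j ∉ A, c j = 0) ∧ ∑ j, c j • v j = x := by
  classical
  rw [mem_span_image_finset_iff_exists_fun']
  constructor
  · rintro ⟨c, rfl⟩
    refine ⟨fun j => if j ∈ A then c j else 0, fun j hj => if_neg hj, ?_⟩
    simp [ite_smul, sum_ite_mem]
  · rintro ⟨c, hc, rfl⟩
    exact ⟨c, Finset.sum_subset (subset_univ A) fun j _ hj => by rw [hc j hj, zero_smul]⟩

theorem Submodule.starProjection_eq_of_forall_norm_sub_le {F : Type*} [NormedAddCommGroup F]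
    [InnerProductSpace ℝ F] {K : Submodule ℝ F} [K.HasOrthogonalProjection] {u v : F}
    (hv : v ∈ K) (h : ∀ w ∈ K, ‖u - v‖ ≤ ‖u - w‖) : K.starProjection u = v := by
  refine eq_starProjection_of_mem_of_inner_eq_zero hv
    ((norm_eq_iInf_iff_real_inner_eq_zero K hv).1 ?_)
  exact le_antisymm (le_ciInf fun w => h w w.2)
    (ciInf_le ⟨0, by rintro _ ⟨w, rfl⟩; exact norm_nonneg _⟩ (⟨v, hv⟩ : K))

section SigmaMin
variable {n : ℕ} {ι : Type*} [Fintype ι] (φ : ι → EuclideanSpace ℝ (Fin n))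

theorem sigmaMin_nonneg : 0 ≤ sigmaMin φ :=
  Real.sInf_nonneg (by rintro t ⟨v, -, rfl⟩; exact norm_nonneg _)

theorem sigmaMin_le_of_norm_eq_one {v : EuclideanSpace ℝ ι} (hv : ‖v‖ = 1) :
    sigmaMin φ ≤ ‖∑ j, v j • φ j‖ :=
  csInf_le ⟨0, by rintro t ⟨v, -, rfl⟩; exact norm_nonneg _⟩ ⟨v, hv, rfl⟩

theorem sigmaMin_le_norm (i : ι) : sigmaMin φ ≤ ‖φ i‖ := by
  classical
  simpa [PiLp.single_apply] using
    sigmaMin_le_of_norm_eq_one φ (v := EuclideanSpace.single i 1) (by simp)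

theorem sigmaMin_mul_norm_le (v : EuclideanSpace ℝ ι) :
    sigmaMin φ * ‖v‖ ≤ ‖∑ j, v j • φ j‖ := by
  rcases eq_or_ne v 0 with rfl | hv
  · simp
  have hv' : 0 < ‖v‖ := norm_pos_iff.2 hv
  have h := sigmaMin_le_of_norm_eq_one φ (v := ‖v‖⁻¹ • v) (by simp [norm_smul, hv'.ne'])
  simp only [PiLp.smul_apply, smul_eq_mul, mul_smul, ← Finset.smul_sum, norm_smul,
    norm_inv, norm_norm] at h
  rwa [le_inv_mul_iff₀ hv', mul_comm] at h

theorem sigmaMin_mul_abs_le (v : ι → ℝ) (i : ι) :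
    sigmaMin φ * |v i| ≤ ‖∑ j, v j • φ j‖ :=
  (mul_le_mul_of_nonneg_left (by simpa using PiLp.norm_apply_le (WithLp.toLp 2 v) i)
    (sigmaMin_nonneg φ)).trans (sigmaMin_mul_norm_le φ (WithLp.toLp 2 v))

theorem sigmaMin_mul_abs_le_of_inner_eq_zero {i : ι} (hφi : ‖φ i‖ = 1) {u : ι → ℝ}
    (hu : ⟪∑ j, u j • φ j, φ i⟫ = 0) :
    sigmaMin φ * |u i| ≤ √(1 - sigmaMin φ ^ 2) * ‖∑ j, u j • φ j‖ := by
  classical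
  set σ := sigmaMin φ
  set x := ∑ j, u j • φ j
  have hσ0 : 0 ≤ σ := sigmaMin_nonneg φ
  have hσ1 : σ ≤ 1 := (sigmaMin_le_norm φ i).trans_eq hφi
  -- Moving the `i`-th coefficient of `u` to `s` moves `x` along `φ i ⊥ x`.
  have hquad : ∀ s, σ ^ 2 * s ^ 2 ≤ ‖x‖ ^ 2 + (s - u i) ^ 2 := by
    intro s
    have hv := sigmaMin_mul_abs_le φ (u + (s - u i) • Pi.single i 1) i
    have hsum : ∑ j, (u + (s - u i) • Pi.single i 1 : ι → ℝ) j • φ j = x + (s - u i) • φ i := by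
      simp only [← Fintype.linearCombination_apply ℝ, map_add, map_smul,
        Fintype.linearCombination_apply_single, one_smul, x]
    have hnorm : ‖x + (s - u i) • φ i‖ ^ 2 = ‖x‖ ^ 2 + (s - u i) ^ 2 := by
      rw [norm_add_sq_real, real_inner_smul_right, hu, norm_smul, hφi, Real.norm_eq_abs, mul_one,
        sq_abs]
      ring
    rw [hsum] at hv
    simp only [Pi.add_apply, Pi.smul_apply, Pi.single_eq_same, smul_eq_mul, mul_one,
      add_sub_cancel] at hv
    rw [← hnorm, ← sq_abs s, ← mul_pow]
    exact pow_le_pow_left₀ (by positivity) hv 2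
  have hsq := sq_mul_sq_le_of_forall_sq_le (by nlinarith) hquad
  rw [← pow_le_pow_iff_left₀ (by positivity) (by positivity) two_ne_zero, mul_pow, mul_pow,
    sq_abs, Real.sq_sqrt (by nlinarith)]
  exact hsq

theorem norm_lt_norm_add_sum {i : ι} (hφi : ‖φ i‖ = 1) {r : EuclideanSpace ℝ (Fin n)}
    (hr : ⟪r, φ i⟫ = 0) (d : ι → ℝ)
    (hgap : ‖r‖ * (1 + √(1 - sigmaMin φ ^ 2)) < sigmaMin φ * |d i|) :
    ‖r‖ < ‖r + ∑ j, d j • φ j‖ := by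
  set σ := sigmaMin φ
  set K := span ℝ (Set.range φ)
  obtain ⟨u, hu⟩ := (mem_span_range_iff_exists_fun ℝ).1 (K.starProjection_apply_mem r)
  set r₂ := r - K.starProjection r
  have hr₂ : ∀ x ∈ K, ⟪x, r₂⟫ = 0 := (K.mem_orthogonal r₂).1 (K.sub_starProjection_mem_orthogonal r)
  have hφK : ∀ v : ι → ℝ, ∑ j, v j • φ j ∈ K := fun v =>
    (mem_span_range_iff_exists_fun ℝ).2 ⟨v, rfl⟩
  have hr_eq : r = ∑ j, u j • φ j + r₂ := by rw [hu, add_sub_cancel]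
  have hrd_eq : r + ∑ j, d j • φ j = ∑ j, (u + d) j • φ j + r₂ := by
    simp only [Pi.add_apply, add_smul, sum_add_distrib, hr_eq]
    abel
  have hui : ⟪∑ j, u j • φ j, φ i⟫ = 0 := by
    have := hr₂ (φ i) (subset_span ⟨i, rfl⟩)
    rw [hr_eq, inner_add_left, real_inner_comm (φ i) r₂, this, add_zero] at hr
    exact hr
  -- Pythagoras along `K ⊕ Kᗮ` reduces the claim to `‖Φ u‖ < ‖Φ (u + d)‖`.
  have hr_sq : ‖r‖ ^ 2 = ‖∑ j, u j • φ j‖ ^ 2 + ‖r₂‖ ^ 2 := by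
    rw [hr_eq, norm_add_sq_real, hr₂ _ (hφK u)]
    ring
  have hrd_sq : ‖r + ∑ j, d j • φ j‖ ^ 2 = ‖∑ j, (u + d) j • φ j‖ ^ 2 + ‖r₂‖ ^ 2 := by
    rw [hrd_eq, norm_add_sq_real, hr₂ _ (hφK _)]
    ring
  have hu_le : ‖∑ j, u j • φ j‖ ≤ ‖r‖ := by nlinarith [norm_nonneg r, norm_nonneg (∑ j, u j • φ j)]
  have hb := Real.sqrt_nonneg (1 - σ ^ 2)
  have hσu := sigmaMin_mul_abs_le_of_inner_eq_zero φ hφi hui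
  have hσud : σ * |d i| - σ * |u i| ≤ ‖∑ j, (u + d) j • φ j‖ := by
    rw [← mul_sub]
    refine (mul_le_mul_of_nonneg_left ?_ (sigmaMin_nonneg φ)).trans
      (sigmaMin_mul_abs_le φ (u + d) i)
    rw [Pi.add_apply, add_comm]
    exact abs_sub_abs_le_abs_add (d i) (u i)
  have hlt : ‖∑ j, u j • φ j‖ < ‖∑ j, (u + d) j • φ j‖ := by
    nlinarith [mul_le_mul_of_nonneg_left hu_le hb]
  refine lt_of_pow_lt_pow_left₀ 2 (norm_nonneg _) ?_
  rw [hr_sq, hrd_sq]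
  gcongr

end SigmaMin

section LeastSquares
variable {n m : ℕ} (φ : Fin m → EuclideanSpace ℝ (Fin n)) (y : EuclideanSpace ℝ (Fin n))

theorem lsResidual_eq (A : Finset (Fin m)) :
    lsResidual φ y A = y - (span ℝ (φ '' A)).starProjection y := rfl

theorem norm_lsResidual_le {A : Finset (Fin m)} {w : EuclideanSpace ℝ (Fin n)}
    (hw : w ∈ span ℝ (φ '' A)) : ‖lsResidual φ y A‖ ≤ ‖y - w‖ := by
  rw [lsResidual_eq, starProjection_minimal]
  exact ciInf_le ⟨0, by rintro _ ⟨w, rfl⟩; exact norm_nonneg _⟩ (⟨w, hw⟩ : span ℝ (φ '' A))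

theorem norm_lsResidual_le_of_subset {A A' : Finset (Fin m)} (h : A ⊆ A') :
    ‖lsResidual φ y A'‖ ≤ ‖lsResidual φ y A‖ :=
  norm_lsResidual_le φ y <|
    span_mono (Set.image_mono (coe_subset.2 h)) (starProjection_apply_mem _ y)

theorem inner_lsResidual_eq_zero {A : Finset (Fin m)} {j : Fin m} (hj : j ∈ A) :
    ⟪lsResidual φ y A, φ j⟫ = 0 :=
  (mem_orthogonal' _ _).1 (sub_starProjection_mem_orthogonal y) _ (subset_span ⟨j, hj, rfl⟩)

theorem lsResidual_eq_of_forall_norm_le {A : Finset (Fin m)} {x : Fin m → ℝ}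
    (hx : ∀ j ∉ A, x j = 0)
    (hopt : ∀ x' : Fin m → ℝ, (∀ j ∉ A, x' j = 0) →
      ‖y - ∑ j, x j • φ j‖ ≤ ‖y - ∑ j, x' j • φ j‖) :
    lsResidual φ y A = y - ∑ j, x j • φ j := by
  rw [lsResidual_eq, starProjection_eq_of_forall_norm_sub_le
    (mem_span_image_finset_iff_exists_sum.2 ⟨x, hx, rfl⟩)]
  intro w hw
  obtain ⟨c, hc, rfl⟩ := mem_span_image_finset_iff_exists_sum.1 hw
  exact hopt c hc

theorem norm_lt_norm_lsResidual {x : Fin m → ℝ} {i : Fin m} (hφi : ‖φ i‖ = 1)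
    (hi : ⟪y - ∑ j, x j • φ j, φ i⟫ = 0)
    (hgap : ‖y - ∑ j, x j • φ j‖ * (1 + √(1 - sigmaMin φ ^ 2)) < sigmaMin φ * |x i|)
    {A : Finset (Fin m)} (hiA : i ∉ A) :
    ‖y - ∑ j, x j • φ j‖ < ‖lsResidual φ y A‖ := by
  obtain ⟨c, hc, hcy⟩ := mem_span_image_finset_iff_exists_sum.1
    ((span ℝ (φ '' A)).starProjection_apply_mem y)
  have hres : lsResidual φ y A = (y - ∑ j, x j • φ j) + ∑ j, (x - c) j • φ j := by
    rw [lsResidual_eq, ← hcy]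
    simp only [Pi.sub_apply, sub_smul, sum_sub_distrib]
    abel
  rw [hres]
  exact norm_lt_norm_add_sum φ hφi hi (x - c) (by rwa [Pi.sub_apply, hc i hiA, sub_zero])

end LeastSquares

section BackwardRegression
variable {n m : ℕ} {φ : Fin m → EuclideanSpace ℝ (Fin n)} {y : EuclideanSpace ℝ (Fin n)}
  {S : Finset (Fin m)}

theorem BRStep.subset_of_ssubset
    (hsep : ∀ A A', S ⊆ A → ¬ S ⊆ A' → ‖lsResidual φ y A‖ < ‖lsResidual φ y A'‖)
    {A B : Finset (Fin m)} (hSA : S ⊂ A) (h : BRStep φ y A B) : S ⊆ B ∧ #B + 1 = #A := by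
  obtain ⟨i, hiA, rfl, hmin⟩ := h
  have hiS : i ∉ S := by
    intro hiS
    obtain ⟨j, hjA, hjS⟩ := exists_of_ssubset hSA
    have := hsep (A.erase j) (A.erase i) (fun s hs => mem_erase.2 ⟨ne_of_mem_of_not_mem hs hjS,
      hSA.subset hs⟩) (fun h => notMem_erase i A (h hiS))
    exact (hmin j hjA).not_gt this
  exact ⟨fun s hs => mem_erase.2 ⟨ne_of_mem_of_not_mem hs hiS, hSA.subset hs⟩,
    card_erase_add_one hiA⟩

theorem BRStep.chain_end_eq
    (hsep : ∀ A A', S ⊆ A → ¬ S ⊆ A' → ‖lsResidual φ y A‖ < ‖lsResidual φ y A'‖)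
    {B : ℕ → Finset (Fin m)} (h0 : B 0 = univ)
    (hstep : ∀ t < m - #S, BRStep φ y (B t) (B (t + 1))) : B (m - #S) = S := by
  have hSm : #S ≤ m := (card_le_univ S).trans_eq (Fintype.card_fin m)
  have hinv : ∀ t ≤ m - #S, S ⊆ B t ∧ #(B t) + t = m := by
    intro t
    induction t with
    | zero => simp [h0]
    | succ t ih =>
      intro ht
      obtain ⟨hsub, hcard⟩ := ih (by omega)
      have hSB : S ⊂ B t := ssubset_of_subset_of_ne hsub fun h => by rw [← h] at hcard; omega
      obtain ⟨hsub', hcard'⟩ := (hstep t (by omega)).subset_of_ssubset hsep hSB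
      exact ⟨hsub', by omega⟩
  obtain ⟨hsub, hcard⟩ := hinv _ le_rfl
  exact (eq_of_subset_of_card_le hsub (by omega)).symm

end BackwardRegression

theorem backward_regression_subset_selection_optimality_general {n m k : ℕ}
    (φ : Fin m → EuclideanSpace ℝ (Fin n))
    (hunit : ∀ j, ‖φ j‖ = 1)
    (y : EuclideanSpace ℝ (Fin n)) (xk : Fin m → ℝ)
    (hsparse : (Finset.univ.filter fun i => xk i ≠ 0).card ≤ k)
    (hne : (Finset.univ.filter fun i => xk i ≠ 0).Nonempty)
    (hopt : ∀ x' : Fin m → ℝ, (Finset.univ.filter fun i => x' i ≠ 0).card ≤ k →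
      ‖y - ∑ j, xk j • φ j‖ ≤ ‖y - ∑ j, x' j • φ j‖)
    (hbound : sigmaMin φ / Real.sqrt (2 * (2 - sigmaMin φ ^ 2)) *
        ((Finset.univ.filter fun i => xk i ≠ 0).inf' hne fun i => |xk i|) >
      ‖y - ∑ j, xk j • φ j‖) :
    ∀ B : ℕ → Finset (Fin m), B 0 = Finset.univ →
      (∀ t < m - (Finset.univ.filter fun i => xk i ≠ 0).card,
        BRStep φ y (B t) (B (t+1))) →
      B (m - (Finset.univ.filter fun i => xk i ≠ 0).card) =
          (Finset.univ.filter fun i => xk i ≠ 0) ∧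
        y - lsResidual φ y (Finset.univ.filter fun i => xk i ≠ 0) = ∑ j, xk j • φ j := by
  intro B hB0 hstep
  set S := univ.filter fun i => xk i ≠ 0
  set σ := sigmaMin φ
  set r := y - ∑ j, xk j • φ j
  have hres : lsResidual φ y S = r :=
    lsResidual_eq_of_forall_norm_le φ y (fun j hj => by simpa [S] using hj) fun x' hx' =>
      hopt x' ((card_le_card fun j hj => by_contra fun hjS => by simp [hx' j hjS] at hj).trans
        hsparse)
  obtain ⟨i₀, -⟩ := hne
  have hσ0 : 0 ≤ σ := sigmaMin_nonneg φ
  have hgap : ∀ i ∈ S, ‖r‖ * (1 + √(1 - σ ^ 2)) < σ * |xk i| := fun i hi =>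
    (mul_one_add_sqrt_lt_of_lt_div hσ0 ((sigmaMin_le_norm φ i₀).trans_eq (hunit i₀))
      (norm_nonneg r) hbound).trans_le (mul_le_mul_of_nonneg_left (inf'_le _ hi) hσ0)
  have hsep : ∀ A A', S ⊆ A → ¬ S ⊆ A' → ‖lsResidual φ y A‖ < ‖lsResidual φ y A'‖ := by
    intro A A' hA hA'
    obtain ⟨i, hiS, hiA'⟩ := not_subset.1 hA'
    calc ‖lsResidual φ y A‖ ≤ ‖lsResidual φ y S‖ := norm_lsResidual_le_of_subset φ y hA
      _ = ‖r‖ := by rw [hres]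
      _ < ‖lsResidual φ y A'‖ := norm_lt_norm_lsResidual φ y (hunit i)
          (hres ▸ inner_lsResidual_eq_zero φ y hiS :) (hgap i hiS) hiA'
  exact ⟨BRStep.chain_end_eq hsep hB0 hstep, by rw [hres, sub_sub_cancel]⟩

/-- subset-selection optimality theorem of the paper: if `x_k` is an
optimal `k`-sparse approximant of `y` over the columns of `Φ` (full column rank, unit
columns) and its residual `r_k = y − Φx_k` satisfies
`(σ_min(Φ)/√(2(2−σ_min(Φ)²))) min_{(x_k)_i ≠ 0} |(x_k)_i| > ‖r_k‖₂`, then Backward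
Regression run from the full active set for `m − ‖x_k‖₀` iterations terminates with the
support of `x_k`, whose least-squares fit equals `Φx_k`. -/
theorem backward_regression_subset_selection_optimality {n m k : ℕ}
    (φ : Fin m → EuclideanSpace ℝ (Fin n)) (hrank : LinearIndependent ℝ φ)
    (hunit : ∀ j, ‖φ j‖ = 1) (hkm : k ≤ m)
    (y : EuclideanSpace ℝ (Fin n)) (xk : Fin m → ℝ)
    (hsparse : (Finset.univ.filter fun i => xk i ≠ 0).card ≤ k)
    (hne : (Finset.univ.filter fun i => xk i ≠ 0).Nonempty)
    (hopt : ∀ x' : Fin m → ℝ, (Finset.univ.filter fun i => x' i ≠ 0).card ≤ k →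
      ‖y - ∑ j, xk j • φ j‖ ≤ ‖y - ∑ j, x' j • φ j‖)
    (hbound : sigmaMin φ / Real.sqrt (2 * (2 - sigmaMin φ ^ 2)) *
        ((Finset.univ.filter fun i => xk i ≠ 0).inf' hne fun i => |xk i|) >
      ‖y - ∑ j, xk j • φ j‖) :
    ∀ B : ℕ → Finset (Fin m), B 0 = Finset.univ →
      (∀ t < m - (Finset.univ.filter fun i => xk i ≠ 0).card,
        BRStep φ y (B t) (B (t+1))) →
      B (m - (Finset.univ.filter fun i => xk i ≠ 0).card) =
          (Finset.univ.filter fun i => xk i ≠ 0) ∧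
        y - lsResidual φ y (Finset.univ.filter fun i => xk i ≠ 0) = ∑ j, xk j • φ j :=
  backward_regression_subset_selection_optimality_general φ hunit y xk hsparse hne hopt hbound
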